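/- Let β ∈ (0,1) be a real number, n ≥ 1 and N natural numbers, x : Fin n → Fin N → Bool the experts' predictions, and c : Fin N → Bool the correct labels. For an expert i and a time t ≤ N, let mist i t denote the number of trials j < t with x i j ≠ c j, let w i t = β^(mist i t), let W t = ∑_{i} w i t, and let F t = (∑_{i : x i t ≠ c t} w i t) / W t. Then for every expert k, the expected number of mistakes M = ∑_{t < N} F t satisfies M ≤ (mist k N * ln(1/β) + ln n) / (1 - β). -/

import Mathlib

/-- Number of mistakes expert `i` made during the first `t` trials. -/
def mist {n N : ℕ} (x : Fin n → Fin N → Bool) (c : Fin N → Bool)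
    (i : Fin n) (t : ℕ) : ℕ :=
  (Finset.univ.filter (fun j : Fin N => (j : ℕ) < t ∧ x i j ≠ c j)).card

/-- Weight of expert `i` just before trial `t`. -/
noncomputable def w (β : ℝ) {n N : ℕ} (x : Fin n → Fin N → Bool) (c : Fin N → Bool)
    (i : Fin n) (t : ℕ) : ℝ :=
  β ^ (mist x c i t)

/-- Total weight just before trial `t`. -/
noncomputable def W (β : ℝ) {n N : ℕ} (x : Fin n → Fin N → Bool) (c : Fin N → Bool)
    (t : ℕ) : ℝ :=
  ∑ i : Fin n, w β x c i t

/-- Fraction of the total weight placed on the wrong answer at trial `t`. -/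
noncomputable def F (β : ℝ) {n N : ℕ} (x : Fin n → Fin N → Bool) (c : Fin N → Bool)
    (t : Fin N) : ℝ :=
  (∑ i ∈ Finset.univ.filter (fun i : Fin n => x i t ≠ c t), w β x c i (t : ℕ)) /
    W β x c (t : ℕ)

/-! At trial `t` exactly the erring experts lose a factor `β`, so the total weight is multiplied
by `1 - (1 - β) F t`. As `1 - y ≤ exp (-y)`, this gives `W N ≤ n * exp (-(1 - β) M)`, while
`W N ≥ w k N = β ^ mist k N`; comparing logarithms yields the bound. -/

open Finset Real

theorem mist_succ {n N : ℕ} (x : Fin n → Fin N → Bool) (c : Fin N → Bool) (i : Fin n)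
    (t : Fin N) : mist x c i (t + 1) = mist x c i t + if x i t ≠ c t then 1 else 0 := by
  unfold mist
  split_ifs
  · rw [← card_insert_of_notMem (s := filter _ _) (a := t) (by simp)]
    congr 1
    ext j
    simp only [mem_filter, mem_univ, true_and, mem_insert]
    grind
  · exact congrArg card (filter_congr fun j _ => by grind)

theorem w_succ (β : ℝ) {n N : ℕ} (x : Fin n → Fin N → Bool) (c : Fin N → Bool) (i : Fin n)
    (t : Fin N) : w β x c i (t + 1) = w β x c i t * if x i t ≠ c t then β else 1 := by
  rw [w, w, mist_succ]
  split_ifs <;> simp [pow_succ]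

theorem W_zero (β : ℝ) {n N : ℕ} (x : Fin n → Fin N → Bool) (c : Fin N → Bool) :
    W β x c 0 = n := by
  simp [W, w, mist]

theorem w_le_W {β : ℝ} (hβ : 0 ≤ β) {n N : ℕ} (x : Fin n → Fin N → Bool) (c : Fin N → Bool)
    (i : Fin n) (t : ℕ) : w β x c i t ≤ W β x c t :=
  single_le_sum (f := fun i => w β x c i t) (fun _ _ => pow_nonneg hβ _) (mem_univ i)

theorem W_pos {β : ℝ} (hβ : 0 < β) {n N : ℕ} (x : Fin n → Fin N → Bool) (c : Fin N → Bool)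
    (i : Fin n) (t : ℕ) : 0 < W β x c t :=
  (pow_pos hβ _).trans_le (w_le_W hβ.le x c i t)

theorem W_succ (β : ℝ) {n N : ℕ} (x : Fin n → Fin N → Bool) (c : Fin N → Bool) (t : Fin N)
    (hW : W β x c t ≠ 0) : W β x c (t + 1) = W β x c t * (1 - (1 - β) * F β x c t) := by
  have hF : F β x c t * W β x c t =
      ∑ i, if x i t ≠ c t then w β x c i t else 0 := by
    rw [F, div_mul_cancel₀ _ hW, sum_filter]
  calc W β x c (t + 1)
      = ∑ i, (w β x c i t - (1 - β) * if x i t ≠ c t then w β x c i t else 0) := by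
        simp only [W, w_succ]
        refine sum_congr rfl fun i _ => ?_
        split_ifs <;> ring
    _ = W β x c t * (1 - (1 - β) * F β x c t) := by
        rw [sum_sub_distrib, ← mul_sum, ← hF, W]; ring

theorem le_mul_exp_neg_sum_of_eq_mul_one_sub {N : ℕ} (a : ℕ → ℝ) (y : Fin N → ℝ)
    (ha : ∀ t : Fin N, 0 ≤ a t) (hstep : ∀ t : Fin N, a (t + 1) = a t * (1 - y t)) :
    a N ≤ a 0 * exp (-∑ t, y t) := by
  induction N with
  | zero => simp
  | succ N ih =>
    have hN := ih (fun t => y t.castSucc) (fun t => ha t.castSucc) (fun t => hstep t.castSucc)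
    calc a (N + 1) = a N * (1 - y (Fin.last N)) := hstep (Fin.last N)
      _ ≤ a N * exp (-y (Fin.last N)) := by
        gcongr
        · exact ha (Fin.last N)
        · linarith [add_one_le_exp (-y (Fin.last N))]
      _ ≤ a 0 * exp (-∑ t : Fin N, y t.castSucc) * exp (-y (Fin.last N)) := by gcongr
      _ = a 0 * exp (-∑ t, y t) := by
        rw [Fin.sum_univ_castSucc, mul_assoc, ← exp_add, neg_add]

theorem rwm_mistake_bound_general
    (β : ℝ) (hβ0 : 0 < β) (hβ1 : β < 1)
    (n N : ℕ)
    (x : Fin n → Fin N → Bool) (c : Fin N → Bool)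
    (k : Fin n) :
    ∑ t : Fin N, F β x c t ≤
      ((mist x c k N : ℝ) * Real.log (1 / β) + Real.log n) / (1 - β) := by
  have hWN : β ^ mist x c k N ≤ n * exp (-((1 - β) * ∑ t, F β x c t)) := by
    calc β ^ mist x c k N ≤ W β x c N := w_le_W hβ0.le x c k N
      _ ≤ W β x c 0 * exp (-∑ t, (1 - β) * F β x c t) :=
        le_mul_exp_neg_sum_of_eq_mul_one_sub _ _ (fun t => (W_pos hβ0 x c k t).le)
          (fun t => W_succ β x c t (W_pos hβ0 x c k t).ne')
      _ = n * exp (-((1 - β) * ∑ t, F β x c t)) := by rw [W_zero, mul_sum]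
  have hn : (0 : ℝ) < n := by exact_mod_cast k.pos
  have hlog := log_le_log (pow_pos hβ0 _) hWN
  rw [log_pow, log_mul hn.ne' (exp_pos _).ne', log_exp] at hlog
  rw [le_div_iff₀ (by linarith), one_div, log_inv]
  linarith

theorem rwm_mistake_bound
    (β : ℝ) (hβ0 : 0 < β) (hβ1 : β < 1)
    (n N : ℕ) (hn : 1 ≤ n)
    (x : Fin n → Fin N → Bool) (c : Fin N → Bool)
    (k : Fin n) :
    ∑ t : Fin N, F β x c t ≤
      ((mist x c k N : ℝ) * Real.log (1 / β) + Real.log n) / (1 - β) :=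
  rwm_mistake_bound_general β hβ0 hβ1 n N x c k
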